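/- arXiv:math/0610420 — 3 statements merged into one kernel-verified Lean document; each statement's English description precedes it below -/
import Mathlib

section
/- Let K be a compact Hausdorff space, f ∈ C(K), and let S = ⋃_{i∈ℕ} 𝓘(i) be a covering of K by regular isolated families, with the associated recursive families, sets G(j,𝓜), sets B(L,m,n,i,j), the notion of good choice, and the functional Φ. Let L be a closed subset of K and suppose that (𝓜̃,𝓝̃) is a good choice of type (m,n,i,j) on L. Then the supremum sup{Φ(f,L,𝓜,𝓝) : (𝓜,𝓝) ∈ B(L,m,n,i,j)} is strongly attained at (𝓜̃,𝓝̃). -/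
open Set TopologicalSpace

/-- A family of subsets is isolated if each member is disjoint from the closure of the
union of the other members. -/
def IsIsolatedFamily {K : Type*} [TopologicalSpace K] (ℐ : Set (Set K)) : Prop :=
  ∀ N ∈ ℐ, N ∩ closure (⋃₀ (ℐ \ {N})) = ∅

/-- A regular isolated family: `N = closure N \ closure (⋃ (ℐ \ {N}))` for each member. -/
def IsRegularIsolatedFamily {K : Type*} [TopologicalSpace K] (ℐ : Set (Set K)) : Prop :=
  IsIsolatedFamily ℐ ∧ ∀ N ∈ ℐ, N = closure N \ closure (⋃₀ (ℐ \ {N}))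

/-- `Jof F = closure (⋃ F) \ ⋃ F` for a family of sets `F`. -/
def Jof {K : Type*} [TopologicalSpace K] (F : Set (Set K)) : Set K :=
  closure (⋃₀ F) \ ⋃₀ F

/-- Auxiliary recursion defining the families `𝓘(i_0,…,i_k)`, with the sequence of
indices given in *reverse* order (most recent index first):
`𝓘(i_0,…,i_k,i_{k+1}) = {N ∩ J(i_0,…,i_k) : N ∈ 𝓘(i_{k+1})}`. -/
def famRev {K : Type*} [TopologicalSpace K] (𝓘 : ℕ → Set (Set K)) : List ℕ → Set (Set K)
  | [] => ∅
  | [i] => 𝓘 i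
  | i :: j :: l => (fun N => N ∩ Jof (famRev 𝓘 (j :: l))) '' 𝓘 i

/-- The family `𝓘(i_0,…,i_k)`, the index sequence given in natural order. -/
def fam {K : Type*} [TopologicalSpace K] (𝓘 : ℕ → Set (Set K)) (l : List ℕ) :
    Set (Set K) :=
  famRev 𝓘 l.reverse

/-- The set `I(i_0,…,i_k) = ⋃ 𝓘(i_0,…,i_k)`. -/
def ISet {K : Type*} [TopologicalSpace K] (𝓘 : ℕ → Set (Set K)) (l : List ℕ) : Set K :=
  ⋃₀ fam 𝓘 l

/-- The set `J(i_0,…,i_k) = closure I(i_0,…,i_k) \ I(i_0,…,i_k)`. -/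
def JSet {K : Type*} [TopologicalSpace K] (𝓘 : ℕ → Set (Set K)) (l : List ℕ) : Set K :=
  closure (ISet 𝓘 l) \ ISet 𝓘 l

/-- Membership in `Σ`: nonempty strictly increasing finite sequences of naturals. -/
def SigmaMem (l : List ℕ) : Prop :=
  l ≠ [] ∧ l.Chain' (· < ·)

/-- The total order `≺` on finite sequences: `a ≺ b` iff either they first differ at a
position `r` where `a` is smaller, or `b` is a proper initial segment of `a`. -/
def SLt (a b : List ℕ) : Prop :=
  (∃ (r : ℕ) (x y : ℕ), (∀ s < r, a[s]? = b[s]?) ∧ a[r]? = some x ∧ b[r]? = some y ∧ x < y)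
  ∨ (b <+: a ∧ b ≠ a)

/-- The open set `G(j,𝓜) = K \ (⋃_{i ≺ j} closure I(i) ∪ closure ⋃(𝓘(j) \ 𝓜))`. -/
def Gset {K : Type*} [TopologicalSpace K] (𝓘 : ℕ → Set (Set K)) (jl : List ℕ)
    (𝓜 : Set (Set K)) : Set K :=
  (⋃₀ {S | ∃ a : List ℕ, SigmaMem a ∧ SLt a jl ∧ S = closure (ISet 𝓘 a)} ∪
    closure (⋃₀ (fam 𝓘 jl \ 𝓜)))ᶜ

/-- The pair `(𝓜,𝓝)` belongs to `B(L,m,n,i,j)`: finite subsets of `𝓘(i)`, `𝓘(j)` of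
cardinalities `m`, `n`, all of whose members meet `L`, with disjoint closures of the
unions. -/
def InB {K : Type*} [TopologicalSpace K] (𝓘 : ℕ → Set (Set K)) (L : Set K)
    (m n : ℕ) (il jl : List ℕ) (𝓜 𝓝 : Set (Set K)) : Prop :=
  𝓜 ⊆ fam 𝓘 il ∧ 𝓝 ⊆ fam 𝓘 jl ∧ 𝓜.Finite ∧ 𝓝.Finite ∧
    𝓜.ncard = m ∧ 𝓝.ncard = n ∧
    (∀ M ∈ 𝓜, (M ∩ L).Nonempty) ∧ (∀ N ∈ 𝓝, (N ∩ L).Nonempty) ∧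
    closure (⋃₀ 𝓜) ∩ closure (⋃₀ 𝓝) = ∅

/-- The quantity `(B − b) + (a − A)`, where `A = min f[L]`, `B = max f[L]`,
`a = max_{M ∈ 𝓜} inf f[L ∩ closure M]` and `b = min_{N ∈ 𝓝} sup f[L ∩ closure N]`. -/
noncomputable def gcBound {K : Type*} [TopologicalSpace K] (f : K → ℝ) (L : Set K)
    (𝓜 𝓝 : Set (Set K)) : ℝ :=
  (sSup (f '' L) - sInf {x | ∃ N ∈ 𝓝, x = sSup (f '' (L ∩ closure N))})
    + (sSup {x | ∃ M ∈ 𝓜, x = sInf (f '' (L ∩ closure M))} - sInf (f '' L))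

/-- `α = inf f[L \ G(i,𝓜)]`, computed in `EReal` so that `inf ∅ = +∞`. -/
noncomputable def gcAlpha {K : Type*} [TopologicalSpace K] (𝓘 : ℕ → Set (Set K))
    (f : K → ℝ) (L : Set K) (il : List ℕ) (𝓜 : Set (Set K)) : EReal :=
  sInf ((fun t => (f t : EReal)) '' (L \ Gset 𝓘 il 𝓜))

/-- `β = sup f[L \ G(j,𝓝)]`, computed in `EReal` so that `sup ∅ = −∞`. -/
noncomputable def gcBeta {K : Type*} [TopologicalSpace K] (𝓘 : ℕ → Set (Set K))
    (f : K → ℝ) (L : Set K) (jl : List ℕ) (𝓝 : Set (Set K)) : EReal :=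
  sSup ((fun t => (f t : EReal)) '' (L \ Gset 𝓘 jl 𝓝))

/-- `(𝓜,𝓝)` is a good choice of type `(m,n,i,j)` on `L`:
`n⁻¹(B − β) > (B − b) + (a − A)` and `m⁻¹(α − A) > (B − b) + (a − A)`. -/
def GoodChoice {K : Type*} [TopologicalSpace K] (𝓘 : ℕ → Set (Set K)) (f : K → ℝ)
    (L : Set K) (m n : ℕ) (il jl : List ℕ) (𝓜 𝓝 : Set (Set K)) : Prop :=
  ((gcBound f L 𝓜 𝓝 : ℝ) : EReal)
      < ((n : ℝ) : EReal)⁻¹ * (((sSup (f '' L) : ℝ) : EReal) - gcBeta 𝓘 f L jl 𝓝) ∧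
  ((gcBound f L 𝓜 𝓝 : ℝ) : EReal)
      < ((m : ℝ) : EReal)⁻¹ * (gcAlpha 𝓘 f L il 𝓜 - ((sInf (f '' L) : ℝ) : EReal))

/-- The functional
`Φ(f,L,𝓜,𝓝) = ½·max(0, n⁻¹ Σ_{N∈𝓝} max f[L ∩ closure N] − m⁻¹ Σ_{M∈𝓜} min f[L ∩ closure M])`. -/
noncomputable def PhiFn {K : Type*} [TopologicalSpace K] (f : K → ℝ) (L : Set K)
    (m n : ℕ) (𝓜 𝓝 : Set (Set K)) : ℝ :=
  (1 / 2) * max 0 ((n : ℝ)⁻¹ * ∑ᶠ N ∈ 𝓝, sSup (f '' (L ∩ closure N))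
    - (m : ℝ)⁻¹ * ∑ᶠ M ∈ 𝓜, sInf (f '' (L ∩ closure M)))


lemma slt_cons_aux (x : ℕ) {a b : List ℕ} (h : SLt a b) : SLt (x :: a) (x :: b) := by
  rcases h with ⟨r, u, v, hpre, ha, hb, huv⟩ | ⟨hp, hne⟩
  · left
    refine ⟨r + 1, u, v, ?_, by simpa using ha, by simpa using hb, huv⟩
    intro s hs
    cases s with
    | zero => simp
    | succ t => simpa using hpre t (by omega)
  · right
    exact ⟨List.cons_prefix_cons.mpr ⟨rfl, hp⟩, by simpa using hne⟩

lemma slt_total : ∀ a b : List ℕ, a = b ∨ SLt a b ∨ SLt b a := by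
  intro a
  induction a with
  | nil =>
    intro b
    cases b with
    | nil => exact Or.inl rfl
    | cons y bt => exact Or.inr (Or.inr (Or.inr ⟨List.nil_prefix, by simp⟩))
  | cons x as ih =>
    intro b
    cases b with
    | nil => exact Or.inr (Or.inl (Or.inr ⟨List.nil_prefix, by simp⟩))
    | cons y bt =>
      rcases lt_trichotomy x y with h | rfl | h
      · refine Or.inr (Or.inl (Or.inl ⟨0, x, y, ?_, by simp, by simp, h⟩))
        intro s hs; exact absurd hs (Nat.not_lt_zero s)
      · rcases ih bt with rfl | h | h
        · exact Or.inl rfl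
        · exact Or.inr (Or.inl (slt_cons_aux x h))
        · exact Or.inr (Or.inr (slt_cons_aux x h))
      · refine Or.inr (Or.inr (Or.inl ⟨0, y, x, ?_, by simp, by simp, h⟩))
        intro s hs; exact absurd hs (Nat.not_lt_zero s)

lemma sum_bound_special {α : Type*} [DecidableEq α] (t : Finset α) (g : α → ℝ) (c Bv : ℝ)
    (x₀ : α) (hx₀ : x₀ ∈ t) (hc : g x₀ ≤ c) (hg : ∀ x ∈ t, g x ≤ Bv) :
    ∑ x ∈ t, g x ≤ c + ((t.card - 1 : ℕ) : ℝ) * Bv := by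
  rw [← Finset.sum_erase_add t g hx₀]
  have h1 : ∑ x ∈ t.erase x₀, g x ≤ ((t.erase x₀).card) • Bv :=
    Finset.sum_le_card_nsmul _ _ _ fun x hx => hg x (Finset.mem_of_mem_erase hx)
  rw [Finset.card_erase_of_mem hx₀, nsmul_eq_mul] at h1
  linarith

lemma sum_bound_special_lower {α : Type*} [DecidableEq α] (t : Finset α) (g : α → ℝ) (c Av : ℝ)
    (x₀ : α) (hx₀ : x₀ ∈ t) (hc : c ≤ g x₀) (hg : ∀ x ∈ t, Av ≤ g x) :
    c + ((t.card - 1 : ℕ) : ℝ) * Av ≤ ∑ x ∈ t, g x := by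
  rw [← Finset.sum_erase_add t g hx₀]
  have h1 : ((t.erase x₀).card) • Av ≤ ∑ x ∈ t.erase x₀, g x :=
    Finset.card_nsmul_le_sum _ _ _ fun x hx => hg x (Finset.mem_of_mem_erase hx)
  rw [Finset.card_erase_of_mem hx₀, nsmul_eq_mul] at h1
  linarith

lemma ereal_sSup_image' {K : Type*} (f : K → ℝ) (E : Set K) (hne : E.Nonempty)
    (hbdd : BddAbove (f '' E)) :
    sSup ((fun t => (f t : EReal)) '' E) = ((sSup (f '' E) : ℝ) : EReal) := by
  have h : (fun t => (f t : EReal)) '' E = Real.toEReal '' (f '' E) := by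
    rw [Set.image_image]
  rw [h, ← Monotone.map_csSup_of_continuousAt (continuous_coe_real_ereal.continuousAt)
    EReal.coe_strictMono.monotone (hne.image f) hbdd]

lemma ereal_sInf_image' {K : Type*} (f : K → ℝ) (E : Set K) (hne : E.Nonempty)
    (hbdd : BddBelow (f '' E)) :
    sInf ((fun t => (f t : EReal)) '' E) = ((sInf (f '' E) : ℝ) : EReal) := by
  have h : (fun t => (f t : EReal)) '' E = Real.toEReal '' (f '' E) := by
    rw [Set.image_image]
  rw [h, ← Monotone.map_csInf_of_continuousAt (continuous_coe_real_ereal.continuousAt)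
    EReal.coe_strictMono.monotone (hne.image f) hbdd]

/-- Lemma 5.3: if `(𝓜̃,𝓝̃)` is a good choice of type `(m,n,i,j)` on the closed set `L`,
then the supremum of `Φ(f,L,𝓜,𝓝)` over `(𝓜,𝓝) ∈ B(L,m,n,i,j)` is strongly attained
at `(𝓜̃,𝓝̃)`. -/
theorem lemma_5_3 {K : Type*} [TopologicalSpace K] [CompactSpace K] [T2Space K]
    (𝓘 : ℕ → Set (Set K))
    (hreg : ∀ i : ℕ, IsRegularIsolatedFamily (𝓘 i))
    (hcover : ⋃₀ (⋃ i : ℕ, 𝓘 i) = Set.univ)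
    (f : K → ℝ) (hf : Continuous f)
    (L : Set K) (hLcl : IsClosed L)
    (m n : ℕ) (hm : 0 < m) (hn : 0 < n) (il jl : List ℕ)
    (hil : SigmaMem il) (hjl : SigmaMem jl)
    (𝓜t 𝓝t : Set (Set K))
    (hB : InB 𝓘 L m n il jl 𝓜t 𝓝t)
    (hgood : GoodChoice 𝓘 f L m n il jl 𝓜t 𝓝t) :
    sSup ((fun p : Set (Set K) × Set (Set K) => PhiFn f L m n p.1 p.2) ''
        ({p : Set (Set K) × Set (Set K) | InB 𝓘 L m n il jl p.1 p.2} \ {(𝓜t, 𝓝t)}))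
      < PhiFn f L m n 𝓜t 𝓝t := by
  classical
  obtain ⟨hMsub, hNsub, hMfin, hNfin, hMcard, hNcard, hMmeet, hNmeet, hdisj⟩ := hB
  have hLco : IsCompact L := hLcl.isCompact
  have hfimA : BddAbove (f '' L) := (hLco.image hf).bddAbove
  have hfimB : BddBelow (f '' L) := (hLco.image hf).bddBelow
  obtain ⟨N₀, hN₀⟩ : 𝓝t.Nonempty := Set.nonempty_of_ncard_ne_zero (by rw [hNcard]; omega)
  obtain ⟨M₀, hM₀⟩ : 𝓜t.Nonempty := Set.nonempty_of_ncard_ne_zero (by rw [hMcard]; omega)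
  obtain ⟨x₀, hx₀N, hx₀L⟩ := hNmeet N₀ hN₀
  obtain ⟨y₀, hy₀M, hy₀L⟩ := hMmeet M₀ hM₀
  -- membership facts about `Gset`
  have hnotG : ∀ (ll : List ℕ) (𝓧 : Set (Set K)) (x : K),
      x ∈ closure (⋃₀ (fam 𝓘 ll \ 𝓧)) → x ∉ Gset 𝓘 ll 𝓧 := by
    intro ll 𝓧 x hx hG
    exact hG (Or.inr hx)
  have hnotGU : ∀ (ll a : List ℕ) (𝓧 : Set (Set K)) (x : K), SigmaMem a → SLt a ll →
      x ∈ closure (ISet 𝓘 a) → x ∉ Gset 𝓘 ll 𝓧 := by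
    intro ll a 𝓧 x ha hlt hx hG
    exact hG (Or.inl ⟨closure (ISet 𝓘 a), ⟨a, ha, hlt, rfl⟩, hx⟩)
  have hsubE : ∀ (ll : List ℕ) (𝓧 : Set (Set K)), ∀ N ∈ fam 𝓘 ll \ 𝓧,
      L ∩ closure N ⊆ L \ Gset 𝓘 ll 𝓧 := by
    rintro ll 𝓧 N hN x ⟨hxL, hxc⟩
    exact ⟨hxL, hnotG ll 𝓧 x (closure_mono (Set.subset_sUnion_of_mem hN) hxc)⟩
  have hMN : ∀ X ∈ 𝓜t, X ∉ 𝓝t := by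
    intro X hX hX'
    obtain ⟨x, hxX, hxL⟩ := hMmeet X hX
    have hmem : x ∈ closure (⋃₀ 𝓜t) ∩ closure (⋃₀ 𝓝t) :=
      ⟨subset_closure ⟨X, hX, hxX⟩, subset_closure ⟨X, hX', hxX⟩⟩
    rw [hdisj] at hmem
    exact absurd hmem (Set.notMem_empty x)
  -- at least one of the two exceptional sets is nonempty
  have hEne : (L \ Gset 𝓘 jl 𝓝t).Nonempty ∨ (L \ Gset 𝓘 il 𝓜t).Nonempty := by
    rcases slt_total il jl with heq | hlt | hlt
    · subst heq
      exact Or.inl ⟨y₀, hsubE il 𝓝t M₀ ⟨hMsub hM₀, fun h => hMN M₀ hM₀ h⟩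
        ⟨hy₀L, subset_closure hy₀M⟩⟩
    · exact Or.inl ⟨y₀, hy₀L, hnotGU jl il 𝓝t y₀ hil hlt
        (subset_closure ⟨M₀, hMsub hM₀, hy₀M⟩)⟩
    · exact Or.inr ⟨x₀, hx₀L, hnotGU il jl 𝓜t x₀ hjl hlt
        (subset_closure ⟨N₀, hNsub hN₀, hx₀N⟩)⟩
  -- real versions of the good-choice inequalities
  have hgoodb : (L \ Gset 𝓘 jl 𝓝t).Nonempty →
      gcBound f L 𝓜t 𝓝t
        < (n : ℝ)⁻¹ * (sSup (f '' L) - sSup (f '' (L \ Gset 𝓘 jl 𝓝t))) := by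
    intro hne
    have hbdd : BddAbove (f '' (L \ Gset 𝓘 jl 𝓝t)) :=
      BddAbove.mono (Set.image_mono (f := f) Set.diff_subset) hfimA
    have heq : gcBeta 𝓘 f L jl 𝓝t = ((sSup (f '' (L \ Gset 𝓘 jl 𝓝t)) : ℝ) : EReal) :=
      ereal_sSup_image' f _ hne hbdd
    have h1 := hgood.1
    rw [heq, ← EReal.coe_sub, ← EReal.coe_inv, ← EReal.coe_mul, EReal.coe_lt_coe_iff] at h1
    exact h1
  have hgooda : (L \ Gset 𝓘 il 𝓜t).Nonempty →
      gcBound f L 𝓜t 𝓝t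
        < (m : ℝ)⁻¹ * (sInf (f '' (L \ Gset 𝓘 il 𝓜t)) - sInf (f '' L)) := by
    intro hne
    have hbdd : BddBelow (f '' (L \ Gset 𝓘 il 𝓜t)) :=
      BddBelow.mono (Set.image_mono (f := f) Set.diff_subset) hfimB
    have heq : gcAlpha 𝓘 f L il 𝓜t = ((sInf (f '' (L \ Gset 𝓘 il 𝓜t)) : ℝ) : EReal) :=
      ereal_sInf_image' f _ hne hbdd
    have h1 := hgood.2
    rw [heq, ← EReal.coe_sub, ← EReal.coe_inv, ← EReal.coe_mul, EReal.coe_lt_coe_iff] at h1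
    exact h1
  -- abbreviations
  set Bv := sSup (f '' L) with hBv
  set Av := sInf (f '' L) with hAv
  set Eb := L \ Gset 𝓘 jl 𝓝t with hEb
  set Ea := L \ Gset 𝓘 il 𝓜t with hEa
  set br := sSup (f '' Eb) with hbr
  set ar := sInf (f '' Ea) with har
  set bv := sInf {x | ∃ N ∈ 𝓝t, x = sSup (f '' (L ∩ closure N))} with hbv
  set av := sSup {x | ∃ M ∈ 𝓜t, x = sInf (f '' (L ∩ closure M))} with hav
  have hDval : gcBound f L 𝓜t 𝓝t = (Bv - bv) + (av - Av) := rfl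
  have hnpos : (0 : ℝ) < (n : ℝ) := by exact_mod_cast hn
  have hmpos : (0 : ℝ) < (m : ℝ) := by exact_mod_cast hm
  have hn1 : (1 : ℝ) ≤ (n : ℝ) := by exact_mod_cast hn
  have hm1 : (1 : ℝ) ≤ (m : ℝ) := by exact_mod_cast hm
  have hninv : (0 : ℝ) < (n : ℝ)⁻¹ := inv_pos.mpr hnpos
  have hminv : (0 : ℝ) < (m : ℝ)⁻¹ := inv_pos.mpr hmpos
  -- elementary sup/inf facts
  have hmne : ∀ N : Set K, (N ∩ L).Nonempty → (L ∩ closure N).Nonempty := by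
    rintro N ⟨x, hxN, hxL⟩; exact ⟨x, hxL, subset_closure hxN⟩
  have hbddS : ∀ N : Set K, BddAbove (f '' (L ∩ closure N)) :=
    fun N => BddAbove.mono (Set.image_mono (f := f) Set.inter_subset_left) hfimA
  have hbddI : ∀ N : Set K, BddBelow (f '' (L ∩ closure N)) :=
    fun N => BddBelow.mono (Set.image_mono (f := f) Set.inter_subset_left) hfimB
  have hs_le : ∀ N : Set K, (L ∩ closure N).Nonempty → sSup (f '' (L ∩ closure N)) ≤ Bv :=
    fun N hne => csSup_le_csSup hfimA (hne.image f) (Set.image_mono (f := f) Set.inter_subset_left)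
  have hi_ge : ∀ N : Set K, (L ∩ closure N).Nonempty → Av ≤ sInf (f '' (L ∩ closure N)) :=
    fun N hne => csInf_le_csInf hfimB (hne.image f) (Set.image_mono (f := f) Set.inter_subset_left)
  have hbv_le : ∀ N ∈ 𝓝t, bv ≤ sSup (f '' (L ∩ closure N)) := by
    intro N hN
    have hset : {x | ∃ N ∈ 𝓝t, x = sSup (f '' (L ∩ closure N))}
        = (fun N => sSup (f '' (L ∩ closure N))) '' 𝓝t := by
      ext x; simp [eq_comm]
    rw [hbv, hset]
    exact csInf_le ((hNfin.image _).bddBelow) ⟨N, hN, rfl⟩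
  have hav_ge : ∀ M ∈ 𝓜t, sInf (f '' (L ∩ closure M)) ≤ av := by
    intro M hM
    have hset : {x | ∃ M ∈ 𝓜t, x = sInf (f '' (L ∩ closure M))}
        = (fun M => sInf (f '' (L ∩ closure M))) '' 𝓜t := by
      ext x; simp [eq_comm]
    rw [hav, hset]
    exact le_csSup ((hMfin.image _).bddAbove) ⟨M, hM, rfl⟩
  -- bounds on br, ar
  have hbrB : Eb.Nonempty → Av ≤ br ∧ br ≤ Bv := by
    rintro ⟨x, hx⟩
    refine ⟨le_trans (csInf_le hfimB ⟨x, hx.1, rfl⟩)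
      (le_csSup (BddAbove.mono (Set.image_mono (f := f) Set.diff_subset) hfimA) ⟨x, hx, rfl⟩), ?_⟩
    exact csSup_le_csSup hfimA (Set.Nonempty.image f ⟨x, hx⟩) (Set.image_mono (f := f) Set.diff_subset)
  have harB : Ea.Nonempty → Av ≤ ar ∧ ar ≤ Bv := by
    rintro ⟨x, hx⟩
    refine ⟨csInf_le_csInf hfimB (Set.Nonempty.image f ⟨x, hx⟩)
      (Set.image_mono (f := f) Set.diff_subset), ?_⟩
    exact le_trans (csInf_le (BddBelow.mono (Set.image_mono (f := f) Set.diff_subset) hfimB)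
      ⟨x, hx, rfl⟩) (le_csSup hfimA ⟨x, hx.1, rfl⟩)
  -- positivity of bv - av
  have ht0 : 0 < bv - av := by
    rcases hEne with hne | hne
    · have h1 := hgoodb hne
      have h2 := hbrB hne
      have hinv1 : (n : ℝ)⁻¹ ≤ 1 := by
        rw [← one_div]; exact div_le_one_of_le₀ hn1 (le_of_lt hnpos)
      have h3 : (n : ℝ)⁻¹ * (Bv - br) ≤ Bv - Av := by
        have h4 : (n : ℝ)⁻¹ * (Bv - br) ≤ 1 * (Bv - br) :=
          mul_le_mul_of_nonneg_right hinv1 (by linarith [h2.2])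
        linarith [h2.1]
      rw [hDval] at h1
      linarith
    · have h1 := hgooda hne
      have h2 := harB hne
      have hinv1 : (m : ℝ)⁻¹ ≤ 1 := by
        rw [← one_div]; exact div_le_one_of_le₀ hm1 (le_of_lt hmpos)
      have h3 : (m : ℝ)⁻¹ * (ar - Av) ≤ Bv - Av := by
        have h4 : (m : ℝ)⁻¹ * (ar - Av) ≤ 1 * (ar - Av) :=
          mul_le_mul_of_nonneg_right hinv1 (by linarith [h2.1])
        linarith [h2.2]
      rw [hDval] at h1
      linarith
  -- converting finsums to finset sums
  have hsum_eqS : ∀ (𝓧 : Set (Set K)) (hfin : 𝓧.Finite),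
      ∑ᶠ N ∈ 𝓧, sSup (f '' (L ∩ closure N))
        = ∑ N ∈ hfin.toFinset, sSup (f '' (L ∩ closure N)) := by
    intro 𝓧 hfin
    rw [← finsum_mem_coe_finset, Set.Finite.coe_toFinset]
  have hsum_eqI : ∀ (𝓧 : Set (Set K)) (hfin : 𝓧.Finite),
      ∑ᶠ M ∈ 𝓧, sInf (f '' (L ∩ closure M))
        = ∑ M ∈ hfin.toFinset, sInf (f '' (L ∩ closure M)) := by
    intro 𝓧 hfin
    rw [← finsum_mem_coe_finset, Set.Finite.coe_toFinset]
  have hcardN : hNfin.toFinset.card = n := by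
    rw [← Set.ncard_eq_toFinset_card 𝓝t hNfin, hNcard]
  have hcardM : hMfin.toFinset.card = m := by
    rw [← Set.ncard_eq_toFinset_card 𝓜t hMfin, hMcard]
  -- lower bound for Φ at the good choice
  have hΦpt : (1 / 2 : ℝ) * (bv - av) ≤ PhiFn f L m n 𝓜t 𝓝t := by
    have h1 : (n : ℝ) * bv ≤ ∑ᶠ N ∈ 𝓝t, sSup (f '' (L ∩ closure N)) := by
      rw [hsum_eqS 𝓝t hNfin]
      have h := Finset.card_nsmul_le_sum hNfin.toFinset
        (fun N => sSup (f '' (L ∩ closure N))) bv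
        (fun N hN => hbv_le N (hNfin.mem_toFinset.mp hN))
      rwa [nsmul_eq_mul, hcardN] at h
    have h2 : ∑ᶠ M ∈ 𝓜t, sInf (f '' (L ∩ closure M)) ≤ (m : ℝ) * av := by
      rw [hsum_eqI 𝓜t hMfin]
      have h := Finset.sum_le_card_nsmul hMfin.toFinset
        (fun M => sInf (f '' (L ∩ closure M))) av
        (fun M hM => hav_ge M (hMfin.mem_toFinset.mp hM))
      rwa [nsmul_eq_mul, hcardM] at h
    have l1 : bv ≤ (n : ℝ)⁻¹ * ∑ᶠ N ∈ 𝓝t, sSup (f '' (L ∩ closure N)) := by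
      have h := mul_le_mul_of_nonneg_left h1 (le_of_lt hninv)
      rwa [show (n : ℝ)⁻¹ * ((n : ℝ) * bv) = bv by field_simp] at h
    have l2 : (m : ℝ)⁻¹ * ∑ᶠ M ∈ 𝓜t, sInf (f '' (L ∩ closure M)) ≤ av := by
      have h := mul_le_mul_of_nonneg_left h2 (le_of_lt hminv)
      rwa [show (m : ℝ)⁻¹ * ((m : ℝ) * av) = av by field_simp] at h
    unfold PhiFn
    have h4 : (n : ℝ)⁻¹ * ∑ᶠ N ∈ 𝓝t, sSup (f '' (L ∩ closure N))
        - (m : ℝ)⁻¹ * ∑ᶠ M ∈ 𝓜t, sInf (f '' (L ∩ closure M))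
        ≤ max 0 ((n : ℝ)⁻¹ * ∑ᶠ N ∈ 𝓝t, sSup (f '' (L ∩ closure N))
        - (m : ℝ)⁻¹ * ∑ᶠ M ∈ 𝓜t, sInf (f '' (L ∩ closure M))) := le_max_right _ _
    linarith
  -- the uniform gap
  set d1 := if Eb.Nonempty then (n : ℝ)⁻¹ * (Bv - br) - gcBound f L 𝓜t 𝓝t else bv - av
    with hd1
  set d2 := if Ea.Nonempty then (m : ℝ)⁻¹ * (ar - Av) - gcBound f L 𝓜t 𝓝t else bv - av
    with hd2
  set d := min (min d1 d2) (bv - av) with hd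
  have hd1pos : 0 < d1 := by
    rw [hd1]; split_ifs with h
    · have := hgoodb h; linarith
    · exact ht0
  have hd2pos : 0 < d2 := by
    rw [hd2]; split_ifs with h
    · have := hgooda h; linarith
    · exact ht0
  have hdpos : 0 < d := lt_min (lt_min hd1pos hd2pos) ht0
  have hdle : d ≤ bv - av := min_le_right _ _
  have hd_le1 : Eb.Nonempty → d ≤ (n : ℝ)⁻¹ * (Bv - br) - gcBound f L 𝓜t 𝓝t := by
    intro h
    have hh : d ≤ d1 := le_trans (min_le_left _ _) (min_le_left _ _)
    rwa [hd1, if_pos h] at hh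
  have hd_le2 : Ea.Nonempty → d ≤ (m : ℝ)⁻¹ * (ar - Av) - gcBound f L 𝓜t 𝓝t := by
    intro h
    have hh : d ≤ d2 := le_trans (min_le_left _ _) (min_le_right _ _)
    rwa [hd2, if_pos h] at hh
  -- the key estimate for any other pair
  have hkey : ∀ 𝓜 𝓝 : Set (Set K), InB 𝓘 L m n il jl 𝓜 𝓝 → ¬(𝓜 = 𝓜t ∧ 𝓝 = 𝓝t) →
      PhiFn f L m n 𝓜 𝓝 ≤ PhiFn f L m n 𝓜t 𝓝t - d / 2 := by
    intro 𝓜 𝓝 hInB hne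
    obtain ⟨hMsub', hNsub', hMfin', hNfin', hMcard', hNcard', hMmeet', hNmeet', hdisj'⟩ := hInB
    have hcardN' : hNfin'.toFinset.card = n := by
      rw [← Set.ncard_eq_toFinset_card 𝓝 hNfin', hNcard']
    have hcardM' : hMfin'.toFinset.card = m := by
      rw [← Set.ncard_eq_toFinset_card 𝓜 hMfin', hMcard']
    have hSle : ∑ᶠ N ∈ 𝓝, sSup (f '' (L ∩ closure N)) ≤ (n : ℝ) * Bv := by
      rw [hsum_eqS 𝓝 hNfin']
      have h := Finset.sum_le_card_nsmul hNfin'.toFinset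
        (fun N => sSup (f '' (L ∩ closure N))) Bv
        (fun N hN => hs_le N (hmne N (hNmeet' N (hNfin'.mem_toFinset.mp hN))))
      rwa [nsmul_eq_mul, hcardN'] at h
    have hIge : (m : ℝ) * Av ≤ ∑ᶠ M ∈ 𝓜, sInf (f '' (L ∩ closure M)) := by
      rw [hsum_eqI 𝓜 hMfin']
      have h := Finset.card_nsmul_le_sum hMfin'.toFinset
        (fun M => sInf (f '' (L ∩ closure M))) Av
        (fun M hM => hi_ge M (hmne M (hMmeet' M (hMfin'.mem_toFinset.mp hM))))
      rwa [nsmul_eq_mul, hcardM'] at h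
    have l1gen : (n : ℝ)⁻¹ * ∑ᶠ N ∈ 𝓝, sSup (f '' (L ∩ closure N)) ≤ Bv := by
      have h := mul_le_mul_of_nonneg_left hSle (le_of_lt hninv)
      rwa [show (n : ℝ)⁻¹ * ((n : ℝ) * Bv) = Bv by field_simp] at h
    have l2gen : Av ≤ (m : ℝ)⁻¹ * ∑ᶠ M ∈ 𝓜, sInf (f '' (L ∩ closure M)) := by
      have h := mul_le_mul_of_nonneg_left hIge (le_of_lt hminv)
      rwa [show (m : ℝ)⁻¹ * ((m : ℝ) * Av) = Av by field_simp] at h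
    have hmain : (n : ℝ)⁻¹ * ∑ᶠ N ∈ 𝓝, sSup (f '' (L ∩ closure N))
        - (m : ℝ)⁻¹ * ∑ᶠ M ∈ 𝓜, sInf (f '' (L ∩ closure M)) ≤ (bv - av) - d := by
      rcases not_and_or.mp hne with hMne | hNne
      · -- 𝓜 ≠ 𝓜t
        obtain ⟨M, hMmem, hMnot⟩ : ∃ M ∈ 𝓜, M ∉ 𝓜t := by
          by_contra hcon
          push_neg at hcon
          exact hMne (Set.eq_of_subset_of_ncard_le hcon (by rw [hMcard, hMcard']) hMfin)
        have hMdiff : M ∈ fam 𝓘 il \ 𝓜t := ⟨hMsub' hMmem, hMnot⟩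
        have hsubM := hsubE il 𝓜t M hMdiff
        have hMLne : (L ∩ closure M).Nonempty := hmne M (hMmeet' M hMmem)
        have hEane : Ea.Nonempty := Set.Nonempty.mono hsubM hMLne
        have hiM : ar ≤ sInf (f '' (L ∩ closure M)) :=
          csInf_le_csInf (BddBelow.mono (Set.image_mono (f := f) Set.diff_subset) hfimB)
            (hMLne.image f) (Set.image_mono (f := f) hsubM)
        have hIge2 : ar + ((m - 1 : ℕ) : ℝ) * Av
            ≤ ∑ᶠ M' ∈ 𝓜, sInf (f '' (L ∩ closure M')) := by
          rw [hsum_eqI 𝓜 hMfin']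
          have h := sum_bound_special_lower hMfin'.toFinset
            (fun M' => sInf (f '' (L ∩ closure M'))) ar Av M
            (hMfin'.mem_toFinset.mpr hMmem) hiM
            (fun X hX => hi_ge X (hmne X (hMmeet' X (hMfin'.mem_toFinset.mp hX))))
          rwa [hcardM'] at h
        have hcast : ((m - 1 : ℕ) : ℝ) = (m : ℝ) - 1 := by
          rw [Nat.cast_sub hm, Nat.cast_one]
        rw [hcast] at hIge2
        have hIins : (m : ℝ)⁻¹ * (ar + ((m : ℝ) - 1) * Av) = Av + (m : ℝ)⁻¹ * (ar - Av) := by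
          field_simp
          ring
        have l2 : Av + (m : ℝ)⁻¹ * (ar - Av)
            ≤ (m : ℝ)⁻¹ * ∑ᶠ M' ∈ 𝓜, sInf (f '' (L ∩ closure M')) := by
          rw [← hIins]
          exact mul_le_mul_of_nonneg_left hIge2 (le_of_lt hminv)
        have hdd := hd_le2 hEane
        rw [hDval] at hdd
        linarith [l1gen, l2, hdd]
      · -- 𝓝 ≠ 𝓝t
        obtain ⟨N, hNmem, hNnot⟩ : ∃ N ∈ 𝓝, N ∉ 𝓝t := by
          by_contra hcon
          push_neg at hcon
          exact hNne (Set.eq_of_subset_of_ncard_le hcon (by rw [hNcard, hNcard']) hNfin)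
        have hNdiff : N ∈ fam 𝓘 jl \ 𝓝t := ⟨hNsub' hNmem, hNnot⟩
        have hsubN := hsubE jl 𝓝t N hNdiff
        have hNLne : (L ∩ closure N).Nonempty := hmne N (hNmeet' N hNmem)
        have hEbne : Eb.Nonempty := Set.Nonempty.mono hsubN hNLne
        have hsN : sSup (f '' (L ∩ closure N)) ≤ br :=
          csSup_le_csSup (BddAbove.mono (Set.image_mono (f := f) Set.diff_subset) hfimA)
            (hNLne.image f) (Set.image_mono (f := f) hsubN)
        have hSle2 : ∑ᶠ N' ∈ 𝓝, sSup (f '' (L ∩ closure N'))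
            ≤ br + ((n - 1 : ℕ) : ℝ) * Bv := by
          rw [hsum_eqS 𝓝 hNfin']
          have h := sum_bound_special hNfin'.toFinset
            (fun N' => sSup (f '' (L ∩ closure N'))) br Bv N
            (hNfin'.mem_toFinset.mpr hNmem) hsN
            (fun X hX => hs_le X (hmne X (hNmeet' X (hNfin'.mem_toFinset.mp hX))))
          rwa [hcardN'] at h
        have hcast : ((n - 1 : ℕ) : ℝ) = (n : ℝ) - 1 := by
          rw [Nat.cast_sub hn, Nat.cast_one]
        rw [hcast] at hSle2
        have hSins : (n : ℝ)⁻¹ * (br + ((n : ℝ) - 1) * Bv) = Bv - (n : ℝ)⁻¹ * (Bv - br) := by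
          field_simp
          ring
        have l1 : (n : ℝ)⁻¹ * ∑ᶠ N' ∈ 𝓝, sSup (f '' (L ∩ closure N'))
            ≤ Bv - (n : ℝ)⁻¹ * (Bv - br) := by
          rw [← hSins]
          exact mul_le_mul_of_nonneg_left hSle2 (le_of_lt hninv)
        have hdd := hd_le1 hEbne
        rw [hDval] at hdd
        linarith [l1, l2gen, hdd]
    have hPhi : PhiFn f L m n 𝓜 𝓝 ≤ (1 / 2 : ℝ) * ((bv - av) - d) := by
      unfold PhiFn
      have hb1 : max 0 ((n : ℝ)⁻¹ * ∑ᶠ N ∈ 𝓝, sSup (f '' (L ∩ closure N))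
          - (m : ℝ)⁻¹ * ∑ᶠ M ∈ 𝓜, sInf (f '' (L ∩ closure M))) ≤ (bv - av) - d :=
        max_le (by linarith [hdle]) hmain
      linarith
    linarith [hPhi, hΦpt]
  -- conclusion
  by_cases hne : ((fun p : Set (Set K) × Set (Set K) => PhiFn f L m n p.1 p.2) ''
      ({p : Set (Set K) × Set (Set K) | InB 𝓘 L m n il jl p.1 p.2} \ {(𝓜t, 𝓝t)})).Nonempty
  · have hub : ∀ x ∈ ((fun p : Set (Set K) × Set (Set K) => PhiFn f L m n p.1 p.2) ''
        ({p : Set (Set K) × Set (Set K) | InB 𝓘 L m n il jl p.1 p.2} \ {(𝓜t, 𝓝t)})),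
        x ≤ PhiFn f L m n 𝓜t 𝓝t - d / 2 := by
      rintro x ⟨⟨𝓜, 𝓝⟩, ⟨hInB', hnotpt⟩, rfl⟩
      refine hkey 𝓜 𝓝 hInB' ?_
      rintro ⟨h1, h2⟩
      exact hnotpt (by rw [Set.mem_singleton_iff, Prod.ext_iff]; exact ⟨h1, h2⟩)
    have hle := csSup_le hne hub
    linarith [hdpos]
  · rw [Set.not_nonempty_iff_eq_empty] at hne
    rw [hne, Real.sSup_empty]
    linarith [hΦpt, ht0]
end

section
/- Let L be a nonempty compact topological space, ε > 0, let f : L → ℝ be continuous with osc(f) < ε, and let (f_r) be a sequence of continuous real-valued functions on L such that ‖f_r‖∞ → ‖f‖∞, ‖(f+f_r)/2‖∞ → ‖f‖∞ and osc(f_r) → osc(f) as r → ∞. Then ‖f − f_r‖∞ < ε for all sufficiently large r. -/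
open Filter Topology

private lemma aux_7_1 {L : Type*} [TopologicalSpace L] [CompactSpace L] [Nonempty L]
    (f g : C(L, ℝ)) (δ : ℝ) (hδ : 0 < δ)
    (hg : ‖g‖ ≤ ‖f‖ + δ)
    (hh : ‖f‖ - δ ≤ ‖(1 / 2 : ℝ) • (f + g)‖)
    (ho : (⨆ t : L, g t) - (⨅ t : L, g t) ≤ (⨆ t : L, f t) - (⨅ t : L, f t) + δ) :
    ‖f - g‖ ≤ ((⨆ t : L, f t) - (⨅ t : L, f t)) + 4 * δ := by
  have bAf : BddAbove (Set.range fun t : L => f t) := (isCompact_range f.continuous).bddAbove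
  have bBf : BddBelow (Set.range fun t : L => f t) := (isCompact_range f.continuous).bddBelow
  have bAg : BddAbove (Set.range fun t : L => g t) := (isCompact_range g.continuous).bddAbove
  have bBg : BddBelow (Set.range fun t : L => g t) := (isCompact_range g.continuous).bddBelow
  set S := ⨆ t : L, f t with hS
  set I := ⨅ t : L, f t with hI
  set Sg := ⨆ t : L, g t with hSg
  set Ig := ⨅ t : L, g t with hIg
  have hfS : ∀ s : L, f s ≤ S := fun s => le_ciSup bAf s
  have hfI : ∀ s : L, I ≤ f s := fun s => ciInf_le bBf s
  have hgS : ∀ s : L, g s ≤ Sg := fun s => le_ciSup bAg s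
  have hgI : ∀ s : L, Ig ≤ g s := fun s => ciInf_le bBg s
  have hoscf_nonneg : 0 ≤ S - I := by
    obtain ⟨s⟩ := ‹Nonempty L›
    have := hfS s; have := hfI s; linarith
  -- a point where |(f+g)/2| attains its max
  set h : C(L, ℝ) := (1 / 2 : ℝ) • (f + g) with hh_def
  obtain ⟨t, -, ht⟩ := isCompact_univ.exists_isMaxOn Set.univ_nonempty
    (continuous_abs.comp h.continuous).continuousOn
  have hnorm : ‖h‖ = |h t| := by
    refine le_antisymm ?_ ?_
    · rw [ContinuousMap.norm_le _ (abs_nonneg _)]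
      exact fun s => ht (Set.mem_univ s)
    · exact h.norm_coe_le_norm t
  have hht : |h t| = |f t + g t| / 2 := by
    have hht' : h t = (f t + g t) / 2 := by simp [hh_def]; ring
    rw [hht', abs_div]; norm_num
  have habs : ‖f‖ - δ ≤ |f t + g t| / 2 := by rw [← hht, ← hnorm]; exact hh
  have hft_norm : |f t| ≤ ‖f‖ := f.norm_coe_le_norm t
  have hgt_norm : |g t| ≤ ‖g‖ := g.norm_coe_le_norm t
  have hft : -‖f‖ ≤ f t ∧ f t ≤ ‖f‖ := abs_le.mp hft_norm
  have hgt : -(‖f‖ + δ) ≤ g t ∧ g t ≤ ‖f‖ + δ := abs_le.mp (hgt_norm.trans hg)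
  have hfn : ∀ s : L, |f s| ≤ ‖f‖ := fun s => f.norm_coe_le_norm s
  have hgn : ∀ s : L, |g s| ≤ ‖f‖ + δ := fun s => (g.norm_coe_le_norm s).trans hg
  rw [ContinuousMap.norm_le _ (by linarith)]
  intro s
  have hfs := abs_le.mp (hfn s)
  have hgs := abs_le.mp (hgn s)
  rw [Real.norm_eq_abs, ContinuousMap.sub_apply, abs_le]
  rcases abs_cases (f t + g t) with ⟨heq, -⟩ | ⟨heq, -⟩
  · -- f t + g t ≥ 0 case: f t, g t near ‖f‖
    have hsum : 2 * ‖f‖ - 2 * δ ≤ f t + g t := by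
      rw [heq] at habs; linarith
    have h1 : ‖f‖ - 3 * δ ≤ f t := by linarith [hgt.2]
    have h2 : ‖f‖ - 2 * δ ≤ g t := by linarith [hft.2]
    have hSge : ‖f‖ - 3 * δ ≤ S := le_trans h1 (hfS t)
    have hSgge : ‖f‖ - 2 * δ ≤ Sg := le_trans h2 (hgS t)
    -- f s ≥ I ≥ S - (S - I), g s ≥ Ig ≥ Sg - osc g
    have hfs_lb : S - (S - I) ≤ f s := by have := hfI s; linarith
    have hgs_lb : Sg - ((S - I) + δ) ≤ g s := by have := hgI s; linarith
    constructor
    · -- f s - g s ≥ -(osc + 4δ): f s ≥ ‖f‖ - 3δ - (S-I), g s ≤ ‖f‖ + δ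
      have : ‖f‖ - 3 * δ - (S - I) ≤ f s := by linarith
      linarith [hgs.2]
    · -- f s - g s ≤ osc + 4δ: f s ≤ ‖f‖, g s ≥ ‖f‖ - 3δ - (S-I)... 
      have : ‖f‖ - 2 * δ - ((S - I) + δ) ≤ g s := by linarith
      linarith [hfs.2]
  · -- f t + g t ≤ 0 case
    have hsum : f t + g t ≤ -(2 * ‖f‖) + 2 * δ := by
      rw [heq] at habs; linarith
    have h1 : f t ≤ -‖f‖ + 3 * δ := by linarith [hgt.1]
    have h2 : g t ≤ -‖f‖ + 2 * δ := by linarith [hft.1]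
    have hIle : I ≤ -‖f‖ + 3 * δ := le_trans (hfI t) h1
    have hIgle : Ig ≤ -‖f‖ + 2 * δ := le_trans (hgI t) h2
    have hfs_ub : f s ≤ I + (S - I) := by have := hfS s; linarith
    have hgs_ub : g s ≤ Ig + ((S - I) + δ) := by have := hgS s; linarith
    constructor
    · have : g s ≤ -‖f‖ + 2 * δ + ((S - I) + δ) := by linarith
      linarith [hfs.1]
    · have : f s ≤ -‖f‖ + 3 * δ + (S - I) := by linarith
      linarith [hgs.1]

/-- Lemma 7.1 (abstract form): let `L` be a nonempty compact space, `f` continuous on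
`L` with oscillation smaller than `ε`, and `(f_r)` a sequence of continuous functions
with `‖f_r‖∞ → ‖f‖∞`, `‖(f+f_r)/2‖∞ → ‖f‖∞` and `osc f_r → osc f`. Then
`‖f − f_r‖∞ < ε` for all sufficiently large `r`. -/
theorem lemma_7_1 {L : Type*} [TopologicalSpace L] [CompactSpace L] [Nonempty L]
    (ε : ℝ) (hε : 0 < ε) (f : C(L, ℝ))
    (hosc : (⨆ t : L, f t) - (⨅ t : L, f t) < ε)
    (fr : ℕ → C(L, ℝ))
    (h1 : Tendsto (fun r => ‖fr r‖) atTop (nhds ‖f‖))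
    (h2 : Tendsto (fun r => ‖(1 / 2 : ℝ) • (f + fr r)‖) atTop (nhds ‖f‖))
    (h3 : Tendsto (fun r => (⨆ t : L, fr r t) - (⨅ t : L, fr r t)) atTop
      (nhds ((⨆ t : L, f t) - (⨅ t : L, f t)))) :
    ∀ᶠ r in atTop, ‖f - fr r‖ < ε := by
  set osc := (⨆ t : L, f t) - (⨅ t : L, f t) with hosc_def
  set δ := (ε - osc) / 5 with hδ_def
  have hδ : 0 < δ := by rw [hδ_def]; linarith
  have e1 := (h1.eventually (eventually_le_nhds (by linarith : ‖f‖ < ‖f‖ + δ)))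
  have e2 := (h2.eventually (eventually_ge_nhds (by linarith : ‖f‖ - δ < ‖f‖)))
  have e3 := (h3.eventually (eventually_le_nhds (by linarith : osc < osc + δ)))
  filter_upwards [e1, e2, e3] with r hr1 hr2 hr3
  have := aux_7_1 f (fr r) δ hδ hr1 hr2 hr3
  calc ‖f - fr r‖ ≤ osc + 4 * δ := this
    _ < ε := by rw [hδ_def]; linarith
end

section
/- Let (X,T) be a topological space and d a metric on X whose topology T_d is finer than T, and suppose property P(d,T) holds. Then there is a network for the metric topology T_d which is σ-isolated for the topology T; equivalently, for each ε > 0 there is a covering of X which is σ-isolated for T and consists of sets of d-diameter at most ε. -/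
open Filter Topology

/-- `d` is a metric on `K` (as a bare distance function). -/
structure IsMetricOn (K : Type*) (d : K → K → ℝ) : Prop where
  self_eq_zero : ∀ x, d x x = 0
  eq_of_dist_eq_zero : ∀ x y, d x y = 0 → x = y
  symm : ∀ x y, d x y = d y x
  triangle : ∀ x y z, d x z ≤ d x y + d y z

/-- The topology `T_d` induced by the distance function `d`: generated by open balls. -/
def metricTopology {K : Type*} (d : K → K → ℝ) : TopologicalSpace K :=
  TopologicalSpace.generateFrom {S | ∃ (x : K) (ε : ℝ), 0 < ε ∧ S = {y | d x y < ε}}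

/-- Property `P(d,T)`: there is a sequence `(B_n)` of subsets of `K` such that the
topology generated by `T ∪ {B_n : n ∈ ℕ}` is finer than the metric topology `T_d`. -/
def PropertyP {K : Type*} (T : TopologicalSpace K) (d : K → K → ℝ) : Prop :=
  ∃ B : ℕ → Set K,
    TopologicalSpace.generateFrom ({U | T.IsOpen U} ∪ Set.range B) ≤ metricTopology d

/-- The LUR hypothesis and conclusion at a point `x`, for a gauge `N`. -/
def LURAt {Z : Type*} [AddCommGroup Z] [Module ℝ Z] (N : Z → ℝ) (x : Z) : Prop :=
  ∀ xr : ℕ → Z,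
    Tendsto (fun r => (1/2) * N x ^ 2 + (1/2) * N (xr r) ^ 2
        - N ((1/2 : ℝ) • (x + xr r)) ^ 2) atTop (nhds 0) →
    Tendsto (fun r => N (x - xr r)) atTop (nhds 0)

/-- `N` is a norm on the real vector space `Z`. -/
def IsNorm {Z : Type*} [AddCommGroup Z] [Module ℝ Z] (N : Z → ℝ) : Prop :=
  (∀ z, 0 ≤ N z) ∧ (∀ z, N z = 0 → z = 0) ∧
    (∀ (c : ℝ) (z : Z), N (c • z) = |c| * N z) ∧
    ∀ z w, N (z + w) ≤ N z + N w

/-!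
Well-order `X` and send each `y` to the first point `c y` of its `δ`-ball. For each `n`, the
balls of radius `ρₙ` about the points `y` lying `3ρₙ` inside the `δ`-ball of `c y`, grouped by
`c y`, give a pairwise disjoint family `V n` of `d`-open sets of diameter at most `2δ`; as `n`
varies they cover `X`. By property `P`, each `V n p` is, near each of its points, a
`T`-neighbourhood relative to some finite intersection `A` of the `B i`. For fixed `n` and `A`
the sets of such points are `T`-isolated: a point in the closure of another one has a
`T`-neighbourhood whose trace on `A` lies in `V n p` yet meets `V n q`.
-/

open Function Set

def IsSigmaIsolated {X : Type*} [TopologicalSpace X] (𝒮 : Set (Set X)) : Prop :=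
  ∃ S : ℕ → Set (Set X), (∀ n, IsIsolatedFamily (S n)) ∧ ⋃ n, S n = 𝒮

section Isolated

variable {X : Type*} [TopologicalSpace X]

theorem IsIsolatedFamily.isSigmaIsolated {𝒮 : Set (Set X)} (h : IsIsolatedFamily 𝒮) :
    IsSigmaIsolated 𝒮 :=
  ⟨fun _ => 𝒮, fun _ => h, iUnion_const 𝒮⟩

theorem isSigmaIsolated_iUnion {ι : Type*} [Countable ι] {𝒮 : ι → Set (Set X)}
    (h : ∀ i, IsSigmaIsolated (𝒮 i)) : IsSigmaIsolated (⋃ i, 𝒮 i) := by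
  choose S hS hS𝒮 using h
  cases isEmpty_or_nonempty ι
  · exact ⟨fun _ => ∅, fun _ _ hN => hN.elim, by simp⟩
  obtain ⟨f, hf⟩ := exists_surjective_nat (ι × ℕ)
  refine ⟨fun k => S (f k).1 (f k).2, fun k => hS _ _, ?_⟩
  rw [hf.iUnion_comp fun ik => S ik.1 ik.2]
  ext N
  simp [← hS𝒮]

theorem isIsolatedFamily_range_of_pairwise_disjoint {ι : Type*} {V : ι → Set X}
    (hV : Pairwise (Disjoint on V)) (A : Set X) :
    IsIsolatedFamily (range fun i => {x ∈ A | V i ∈ 𝓝[A] x}) := by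
  rintro _ ⟨i, rfl⟩
  refine eq_empty_of_forall_notMem fun x ⟨⟨_, hVi⟩, hx⟩ => ?_
  obtain ⟨U, hU, hUA⟩ := mem_nhdsWithin_iff_exists_mem_nhds_inter.1 hVi
  obtain ⟨y, hyU, _, ⟨⟨j, rfl⟩, hji⟩, hyA, hVj⟩ := mem_closure_iff_nhds.1 hx U hU
  have hij : i ≠ j := by rintro rfl; exact hji rfl
  exact (hV hij).ne_of_mem (hUA ⟨hyU, hyA⟩) (mem_of_mem_nhdsWithin hyA hVj) rfl

theorem TopologicalSpace.GenerateOpen.exists_finset_mem_nhdsWithin_biInter {ι : Type*}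
    {B : ι → Set X} {W : Set X} (hW : GenerateOpen ({U | IsOpen U} ∪ range B) W) {x : X}
    (hx : x ∈ W) : ∃ F : Finset ι, x ∈ ⋂ i ∈ F, B i ∧ W ∈ 𝓝[⋂ i ∈ F, B i] x := by
  classical
  induction hW generalizing x with
  | basic S hS =>
    rcases hS with hS | ⟨i, rfl⟩
    · exact ⟨∅, by simp, mem_nhdsWithin_of_mem_nhds (hS.mem_nhds hx)⟩
    · exact ⟨{i}, by simpa using hx, by simpa using self_mem_nhdsWithin⟩
  | univ => exact ⟨∅, by simp, univ_mem⟩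
  | inter S₁ S₂ _ _ ih₁ ih₂ =>
    obtain ⟨F₁, hx₁, hS₁⟩ := ih₁ hx.1
    obtain ⟨F₂, hx₂, hS₂⟩ := ih₂ hx.2
    refine ⟨F₁ ∪ F₂, ?_⟩
    rw [Finset.set_biInter_inter]
    exact ⟨⟨hx₁, hx₂⟩, inter_mem (nhdsWithin_mono x inter_subset_left hS₁)
      (nhdsWithin_mono x inter_subset_right hS₂)⟩
  | sUnion 𝒮 _ ih =>
    obtain ⟨S, hS, hxS⟩ := hx
    obtain ⟨F, hxF, hSF⟩ := ih S hS hxS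
    exact ⟨F, hxF, mem_of_superset hSF (subset_sUnion_of_mem hS)⟩

end Isolated

theorem exists_forall_mem_and_ne_imp_notMem {α β : Type*} (s : α → Set β)
    (hs : ∀ a, (s a).Nonempty) :
    ∃ c : α → β, (∀ a, c a ∈ s a) ∧ ∀ a b, c a ≠ c b → c a ∉ s b ∨ c b ∉ s a := by
  have hwf : WellFounded (WellOrderingRel : β → β → Prop) := IsWellFounded.wf
  refine ⟨fun a => hwf.min (s a) (hs a), fun a => hwf.min_mem _ _, fun a b hab => ?_⟩
  rcases trichotomous_of WellOrderingRel (hwf.min (s a) (hs a)) (hwf.min (s b) (hs b)) with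
    h | h | h
  · exact .inl fun ha => hwf.not_lt_min _ ha h
  · exact absurd h hab
  · exact .inr fun hb => hwf.not_lt_min _ hb h

theorem isOpen_metricTopology_ball {X : Type*} (d : X → X → ℝ) (x : X) {r : ℝ} (hr : 0 < r) :
    IsOpen[metricTopology d] {y | d x y < r} :=
  .basic _ ⟨x, r, hr, rfl⟩

namespace IsMetricOn

variable {X : Type*} {d : X → X → ℝ}

theorem nonneg (hd : IsMetricOn X d) (x y : X) : 0 ≤ d x y := by
  linarith [hd.triangle x y x, hd.symm x y, hd.self_eq_zero x]

theorem exists_ball_subset (hd : IsMetricOn X d) {U : Set X}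
    (hU : IsOpen[metricTopology d] U) {x : X} (hx : x ∈ U) :
    ∃ ρ > 0, {y | d x y < ρ} ⊆ U := by
  induction hU generalizing x with
  | basic S hS =>
    obtain ⟨z, r, -, rfl⟩ := hS
    refine ⟨r - d z x, sub_pos.2 hx, fun y hy => ?_⟩
    have := hd.triangle z x y
    simp only [mem_ofPred_eq] at hx hy ⊢
    linarith
  | univ => exact ⟨1, one_pos, subset_univ _⟩
  | inter S₁ S₂ _ _ ih₁ ih₂ =>
    obtain ⟨ρ₁, hρ₁, hS₁⟩ := ih₁ hx.1
    obtain ⟨ρ₂, hρ₂, hS₂⟩ := ih₂ hx.2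
    refine ⟨min ρ₁ ρ₂, lt_min hρ₁ hρ₂, fun y (hy : d x y < min ρ₁ ρ₂) => ?_⟩
    exact ⟨hS₁ (lt_min_iff.1 hy).1, hS₂ (lt_min_iff.1 hy).2⟩
  | sUnion 𝒮 _ ih =>
    obtain ⟨S, hS, hxS⟩ := hx
    obtain ⟨ρ, hρ, hSρ⟩ := ih S hS hxS
    exact ⟨ρ, hρ, hSρ.trans (subset_sUnion_of_mem hS)⟩

theorem center_eq_of_ball_inter (hd : IsMetricOn X d) {δ ρ : ℝ} {c : X → X}
    (hc : ∀ y z, c y ≠ c z → ¬ d (c y) z < δ ∨ ¬ d (c z) y < δ) {y z w : X}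
    (hy : d (c y) y + 3 * ρ ≤ δ) (hz : d (c z) z + 3 * ρ ≤ δ)
    (hyw : d y w < ρ) (hzw : d z w < ρ) : c y = c z := by
  by_contra hyz
  have := hd.nonneg y w
  have hwz := hd.symm w z
  have hwy := hd.symm w y
  have := hd.triangle (c y) y z
  have := hd.triangle y w z
  have := hd.triangle (c z) z y
  have := hd.triangle z w y
  rcases hc y z hyz with h | h <;> apply h <;> linarith

theorem exists_pairwise_disjoint_cover (hd : IsMetricOn X d) {ε : ℝ} (hε : 0 < ε) :
    ∃ V : ℕ → X → Set X, (∀ n p, IsOpen[metricTopology d] (V n p)) ∧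
      (∀ n, Pairwise (Disjoint on V n)) ∧ (∀ n p, ∀ t ∈ V n p, ∀ u ∈ V n p, d t u ≤ ε) ∧
      ∀ x, ∃ n p, x ∈ V n p := by
  set δ := ε / 2 with hδ
  obtain ⟨c, hcy, hc⟩ := exists_forall_mem_and_ne_imp_notMem (fun y => {p | d p y < δ})
    fun y => ⟨y, by simp [hd.self_eq_zero, δ, hε]⟩
  set r : ℕ → ℝ := fun n => 1 / (n + 1)
  have hr : ∀ n, 0 < r n := fun n => by positivity
  refine ⟨fun n p => ⋃ y ∈ {y | c y = p ∧ d p y + 3 * r n ≤ δ}, {w | d y w < r n},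
    fun n p => @isOpen_biUnion _ _ (metricTopology d) _ _ fun y _ =>
      isOpen_metricTopology_ball d y (hr n), fun n p q hpq => ?_, fun n p t ht u hu => ?_,
    fun x => ?_⟩
  · refine disjoint_left.2 fun w hwp hwq => hpq ?_
    simp only [mem_iUnion₂, mem_ofPred_eq] at hwp hwq
    obtain ⟨y, ⟨rfl, hy⟩, hyw⟩ := hwp
    obtain ⟨z, ⟨rfl, hz⟩, hzw⟩ := hwq
    exact hd.center_eq_of_ball_inter hc hy hz hyw hzw
  · simp only [mem_iUnion₂, mem_ofPred_eq] at ht hu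
    obtain ⟨y, ⟨rfl, hy⟩, hyt⟩ := ht
    obtain ⟨z, ⟨-, hz⟩, hzu⟩ := hu
    have := hd.triangle t y u
    have := hd.triangle y (c y) u
    have := hd.triangle (c y) z u
    have := hd.symm t y
    have := hd.symm y (c y)
    linarith [hr n]
  · obtain ⟨n, hn⟩ := exists_nat_one_div_lt (show 0 < (δ - d (c x) x) / 3 by
      linarith [show d (c x) x < δ from hcy x])
    exact ⟨n, c x, mem_biUnion (x := x) ⟨rfl, by linarith⟩ (by simp [hd.self_eq_zero, hr n])⟩

theorem exists_sigmaIsolated_cover [TopologicalSpace X] (hd : IsMetricOn X d)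
    (hP : PropertyP ‹_› d) {ε : ℝ} (hε : 0 < ε) :
    ∃ 𝒞 : Set (Set X), IsSigmaIsolated 𝒞 ∧ ⋃₀ 𝒞 = univ ∧
      ∀ N ∈ 𝒞, ∀ t ∈ N, ∀ u ∈ N, d t u ≤ ε := by
  obtain ⟨B, hB⟩ := hP
  obtain ⟨V, hVopen, hVdisj, hVdiam, hVcov⟩ := hd.exists_pairwise_disjoint_cover hε
  let A (F : Finset ℕ) : Set X := ⋂ i ∈ F, B i
  let S (nF : ℕ × Finset ℕ) : Set (Set X) :=
    range fun p => {x ∈ A nF.2 | V nF.1 p ∈ 𝓝[A nF.2] x}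
  refine ⟨⋃ nF, S nF, isSigmaIsolated_iUnion fun nF =>
    (isIsolatedFamily_range_of_pairwise_disjoint (hVdisj nF.1) _).isSigmaIsolated, ?_, ?_⟩
  · refine eq_univ_of_forall fun x => ?_
    obtain ⟨n, p, hx⟩ := hVcov x
    obtain ⟨F, hxF, hVF⟩ :=
      (TopologicalSpace.le_def.1 hB _ (hVopen n p)).exists_finset_mem_nhdsWithin_biInter hx
    exact mem_sUnion.2 ⟨_, mem_iUnion.2 ⟨(n, F), p, rfl⟩, hxF, hVF⟩
  · intro N hN
    obtain ⟨nF, p, rfl⟩ := mem_iUnion.1 hN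
    rintro t ⟨htA, htV⟩ u ⟨huA, huV⟩
    exact hVdiam _ _ t (mem_of_mem_nhdsWithin htA htV) u (mem_of_mem_nhdsWithin huA huV)

theorem exists_sigmaIsolated_network [TopologicalSpace X] (hd : IsMetricOn X d)
    (h : ∀ ε > 0, ∃ 𝒞 : Set (Set X), IsSigmaIsolated 𝒞 ∧ ⋃₀ 𝒞 = univ ∧
      ∀ N ∈ 𝒞, ∀ t ∈ N, ∀ u ∈ N, d t u ≤ ε) :
    ∃ 𝒩 : Set (Set X), IsSigmaIsolated 𝒩 ∧
      ∀ x U, IsOpen[metricTopology d] U → x ∈ U → ∃ N ∈ 𝒩, x ∈ N ∧ N ⊆ U := by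
  choose 𝒞 h𝒞 hcov hmesh using fun k : ℕ => h (1 / (k + 1)) Nat.one_div_pos_of_nat
  refine ⟨⋃ k, 𝒞 k, isSigmaIsolated_iUnion h𝒞, fun x U hU hx => ?_⟩
  obtain ⟨ρ, hρ, hball⟩ := hd.exists_ball_subset hU hx
  obtain ⟨k, hk⟩ := exists_nat_one_div_lt hρ
  obtain ⟨N, hN, hxN⟩ := mem_sUnion.1 (hcov k ▸ mem_univ x)
  exact ⟨N, mem_iUnion.2 ⟨k, hN⟩, hxN, fun u hu => hball ((hmesh k N hN x hxN u hu).trans_lt hk)⟩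

end IsMetricOn

theorem sigma_isolated_network_of_propertyP_general {X : Type*} [TopologicalSpace X]
    (d : X → X → ℝ) (hmet : IsMetricOn X d)
    (hP : PropertyP ‹TopologicalSpace X› d) :
    (∃ S : ℕ → Set (Set X), (∀ n : ℕ, IsIsolatedFamily (S n)) ∧
      ∀ (x : X) (U : Set X), (metricTopology d).IsOpen U → x ∈ U →
        ∃ n : ℕ, ∃ N ∈ S n, x ∈ N ∧ N ⊆ U) ∧
    ∀ ε : ℝ, 0 < ε → ∃ S : ℕ → Set (Set X), (∀ n : ℕ, IsIsolatedFamily (S n)) ∧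
      (⋃₀ (⋃ n : ℕ, S n) = Set.univ) ∧
      ∀ N ∈ ⋃ n : ℕ, S n, ∀ t ∈ N, ∀ u ∈ N, d t u ≤ ε := by
  have hcover := fun ε (hε : 0 < ε) => hmet.exists_sigmaIsolated_cover hP hε
  refine ⟨?_, fun ε hε => ?_⟩
  · obtain ⟨_, ⟨S, hS, rfl⟩, hnet⟩ := hmet.exists_sigmaIsolated_network hcover
    refine ⟨S, hS, fun x U hU hx => ?_⟩
    obtain ⟨N, hN, hxN, hNU⟩ := hnet x U hU hx
    obtain ⟨n, hn⟩ := mem_iUnion.1 hN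
    exact ⟨n, N, hn, hxN, hNU⟩
  · obtain ⟨_, ⟨S, hS, rfl⟩, hcov, hmesh⟩ := hcover ε hε
    exact ⟨S, hS, hcov, hmesh⟩

/-- If `P(d,T)` holds then there is a network for the metric topology `T_d` which is
`σ`-isolated for `T`; equivalently, for each `ε > 0` there is a covering of `X` which is
`σ`-isolated for `T` and consists of sets of `d`-diameter at most `ε`. -/
theorem sigma_isolated_network_of_propertyP {X : Type*} [TopologicalSpace X]
    (d : X → X → ℝ) (hmet : IsMetricOn X d)
    (hfiner : metricTopology d ≤ ‹TopologicalSpace X›)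
    (hP : PropertyP ‹TopologicalSpace X› d) :
    (∃ S : ℕ → Set (Set X), (∀ n : ℕ, IsIsolatedFamily (S n)) ∧
      ∀ (x : X) (U : Set X), (metricTopology d).IsOpen U → x ∈ U →
        ∃ n : ℕ, ∃ N ∈ S n, x ∈ N ∧ N ⊆ U) ∧
    ∀ ε : ℝ, 0 < ε → ∃ S : ℕ → Set (Set X), (∀ n : ℕ, IsIsolatedFamily (S n)) ∧
      (⋃₀ (⋃ n : ℕ, S n) = Set.univ) ∧
      ∀ N ∈ ⋃ n : ℕ, S n, ∀ t ∈ N, ∀ u ∈ N, d t u ≤ ε :=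
  sigma_isolated_network_of_propertyP_general d hmet hP
end
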